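/- Let X be a real-valued random variable (integrable with integrable square) and α ∈ (0,1). The function m ↦ E[|α - 1_{X - m < 0}| (X - m)²] is strictly convex in m and has a unique minimizer (the α-expectile of X). -/

import Mathlib

/-!
On `ℝ` the expectile loss is `α max(x, 0)² + (1 - α) min(x, 0)²`, i.e. `min α (1 - α) · x²` plus a
convex function, so it is strictly convex and grows quadratically. Strict convexity of
`m ↦ E[ℓ(X - m)]` follows pointwise in `ω`. By Jensen, `E[ℓ(X - m)] ≥ ℓ(E[X] - m)`, so the expected
loss also tends to `+∞` as `|m| → ∞`; being continuous (it is convex), it attains its minimum,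
which is unique by strict convexity.
-/

open MeasureTheory Filter Set

lemma StrictConvexOn.const_mul {E : Type*} [AddCommMonoid E] [Module ℝ E] {s : Set E}
    {f : E → ℝ} {c : ℝ} (hf : StrictConvexOn ℝ s f) (hc : 0 < c) :
    StrictConvexOn ℝ s fun x => c * f x :=
  ⟨hf.1, fun x hx y hy hxy a b ha hb hab => by
    simpa only [smul_eq_mul, mul_add, mul_left_comm c] using
      mul_lt_mul_of_pos_left (hf.2 hx hy hxy ha hb hab) hc⟩

lemma StrictConvexOn.comp_const_sub {f : ℝ → ℝ} (hf : StrictConvexOn ℝ univ f) (c : ℝ) :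
    StrictConvexOn ℝ univ fun x => f (c - x) :=
  ⟨convex_univ, fun x _ y _ hxy a b ha hb hab => by
    have hcomb : c - (a • x + b • y) = a • (c - x) + b • (c - y) := by
      simp only [smul_eq_mul]; linear_combination (-c) * hab
    simpa only [hcomb] using
      hf.2 (mem_univ _) (mem_univ _) (sub_right_injective.ne hxy) ha hb hab⟩

section FiniteDimensional

variable {E : Type*} [NormedAddCommGroup E] [NormedSpace ℝ E] [FiniteDimensional ℝ E]
  {g : E → ℝ}

lemma ConvexOn.continuous (hg : ConvexOn ℝ univ g) : Continuous g :=
  continuousOn_univ.mp (hg.continuousOn isOpen_univ)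

lemma StrictConvexOn.existsUnique_forall_le (hg : StrictConvexOn ℝ univ g)
    (hlim : Tendsto g (cocompact E) atTop) : ∃! x, ∀ y, g x ≤ g y := by
  obtain ⟨x, hx⟩ := hg.convexOn.continuous.exists_forall_le hlim
  exact ⟨x, hx, fun y hy => hg.eq_of_isMinOn (fun z _ => hy z) (fun z _ => hx z)
    (mem_univ y) (mem_univ x)⟩

end FiniteDimensional

section Integral

variable {Ω : Type*} [MeasurableSpace Ω] {μ : Measure Ω}

lemma integral_lt_integral_of_forall_lt [NeZero μ] {f g : Ω → ℝ} (hf : Integrable f μ)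
    (hg : Integrable g μ) (hfg : ∀ ω, f ω < g ω) : ∫ ω, f ω ∂μ < ∫ ω, g ω ∂μ := by
  have hsupp : Function.support (fun ω => g ω - f ω) = univ :=
    eq_univ_of_forall fun ω => (sub_pos.2 (hfg ω)).ne'
  rw [← sub_pos, ← integral_sub hg hf,
    integral_pos_iff_support_of_nonneg (fun ω => (sub_pos.2 (hfg ω)).le) (hg.sub hf), hsupp]
  exact Measure.measure_univ_pos.2 (NeZero.ne μ)

lemma strictConvexOn_integral [NeZero μ] {E : Type*} [AddCommMonoid E] [Module ℝ E]
    {s : Set E} {F : E → Ω → ℝ} (hF : ∀ ω, StrictConvexOn ℝ s (F · ω))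
    (hFi : ∀ x ∈ s, Integrable (F x) μ) : StrictConvexOn ℝ s fun x => ∫ ω, F x ω ∂μ := by
  obtain ⟨ω₀⟩ := Measure.nonempty_of_neZero μ
  have hs := (hF ω₀).1
  refine ⟨hs, fun x hx y hy hxy a b ha hb hab => ?_⟩
  have hax := (hFi x hx).const_mul a
  have hby := (hFi y hy).const_mul b
  calc ∫ ω, F (a • x + b • y) ω ∂μ < ∫ ω, a * F x ω + b * F y ω ∂μ :=
        integral_lt_integral_of_forall_lt (hFi _ (hs hx hy ha.le hb.le hab)) (hax.add hby)
          fun ω => (hF ω).2 hx hy hxy ha hb hab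
    _ = a • ∫ ω, F x ω ∂μ + b • ∫ ω, F y ω ∂μ := by
        rw [integral_add hax hby, integral_const_mul, integral_const_mul, smul_eq_mul, smul_eq_mul]

variable {X : Ω → ℝ} {f : ℝ → ℝ}

lemma integrable_comp_sub_of_abs_le_sq [IsFiniteMeasure μ] (hf : Continuous f)
    (hf_le : ∀ x, |f x| ≤ x ^ 2) (hX : MemLp X 2 μ) (m : ℝ) :
    Integrable (fun ω => f (X ω - m)) μ :=
  (hX.sub (memLp_const m)).integrable_sq.mono'
    (hf.comp_aestronglyMeasurable (hX.1.sub aestronglyMeasurable_const))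
    (ae_of_all _ fun _ => hf_le _)

variable [IsProbabilityMeasure μ]

lemma tendsto_integral_comp_sub_cocompact (hf : ConvexOn ℝ univ f)
    (hf_lim : Tendsto f (cocompact ℝ) atTop) (hX : Integrable X μ)
    (hfX : ∀ m, Integrable (fun ω => f (X ω - m)) μ) :
    Tendsto (fun m => ∫ ω, f (X ω - m) ∂μ) (cocompact ℝ) atTop := by
  have hjensen (m : ℝ) : f (∫ ω, X ω ∂μ - m) ≤ ∫ ω, f (X ω - m) ∂μ := by
    have := hf.map_integral_le (hf.continuousOn isOpen_univ) isClosed_univ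
      (ae_of_all _ fun ω => mem_univ (X ω - m)) (hX.sub (integrable_const m)) (hfX m)
    rwa [integral_sub hX (integrable_const m), integral_const, probReal_univ, one_smul] at this
  refine tendsto_atTop_mono hjensen (hf_lim.comp ?_)
  exact (Homeomorph.subLeft (∫ ω, X ω ∂μ)).map_cocompact.le

end Integral

section ExpectileLoss

noncomputable def expectileLoss (α x : ℝ) : ℝ := |α - if x < 0 then 1 else 0| * x ^ 2

lemma convexOn_max_zero_sq : ConvexOn ℝ univ fun x : ℝ => max x 0 ^ 2 :=
  ((convexOn_id convex_univ).sup (convexOn_const 0 convex_univ)).pow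
    (fun x _ => le_max_right x 0) 2

lemma convexOn_min_zero_sq : ConvexOn ℝ univ fun x : ℝ => min x 0 ^ 2 := by
  have hneg := convexOn_max_zero_sq.comp_linearMap (-LinearMap.id : ℝ →ₗ[ℝ] ℝ)
  have heq : (fun x : ℝ => max x 0 ^ 2) ∘ (-LinearMap.id : ℝ →ₗ[ℝ] ℝ) = fun x => min x 0 ^ 2 := by
    ext x
    rcases le_total x 0 with h | h <;> simp [h]
  rwa [heq, preimage_univ] at hneg

lemma max_zero_sq_add_min_zero_sq (x : ℝ) : max x 0 ^ 2 + min x 0 ^ 2 = x ^ 2 := by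
  rcases le_total x 0 with h | h <;> simp [h]

lemma strictConvexOn_mul_max_zero_sq_add_mul_min_zero_sq {a b : ℝ} (ha : 0 < a) (hb : 0 < b) :
    StrictConvexOn ℝ univ fun x : ℝ => a * max x 0 ^ 2 + b * min x 0 ^ 2 := by
  set c := min a b
  have hsplit : (fun x : ℝ => a * max x 0 ^ 2 + b * min x 0 ^ 2) =
      fun x => c * x ^ 2 + ((a - c) • max x 0 ^ 2 + (b - c) • min x 0 ^ 2) := by
    ext x
    rw [← max_zero_sq_add_min_zero_sq x, smul_eq_mul, smul_eq_mul]
    ring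
  rw [hsplit]
  exact ((Even.strictConvexOn_pow even_two two_ne_zero).const_mul (lt_min ha hb)).add_convexOn
    ((convexOn_max_zero_sq.smul (sub_nonneg.2 (min_le_left a b))).add
      (convexOn_min_zero_sq.smul (sub_nonneg.2 (min_le_right a b))))

variable {α : ℝ}

lemma expectileLoss_eq (hα : α ∈ Icc 0 1) (x : ℝ) :
    expectileLoss α x = α * max x 0 ^ 2 + (1 - α) * min x 0 ^ 2 := by
  obtain ⟨hα0, hα1⟩ := hα
  rcases lt_or_ge x 0 with h | h
  · simp [expectileLoss, h, h.le, abs_of_nonpos (sub_nonpos.2 hα1)]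
  · simp [expectileLoss, h, not_lt.2 h, abs_of_nonneg hα0]

lemma strictConvexOn_expectileLoss (hα : α ∈ Ioo 0 1) :
    StrictConvexOn ℝ univ (expectileLoss α) := by
  rw [funext (expectileLoss_eq (Ioo_subset_Icc_self hα))]
  exact strictConvexOn_mul_max_zero_sq_add_mul_min_zero_sq hα.1 (sub_pos.2 hα.2)

lemma abs_expectileLoss_le (hα : α ∈ Icc 0 1) (x : ℝ) : |expectileLoss α x| ≤ x ^ 2 := by
  obtain ⟨hα0, hα1⟩ := hα
  have hweight : |α - if x < 0 then 1 else 0| ≤ 1 := by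
    split_ifs <;> rw [abs_le] <;> constructor <;> linarith
  rw [expectileLoss, abs_mul, abs_abs, abs_of_nonneg (sq_nonneg x)]
  exact mul_le_of_le_one_left (sq_nonneg x) hweight

lemma min_mul_sq_le_expectileLoss (x : ℝ) : min α (1 - α) * x ^ 2 ≤ expectileLoss α x := by
  have hweight : min α (1 - α) ≤ |α - if x < 0 then 1 else 0| := by
    split_ifs
    · exact (min_le_right _ _).trans (by rw [abs_sub_comm]; exact le_abs_self _)
    · exact (min_le_left _ _).trans (by rw [sub_zero]; exact le_abs_self _)
  exact mul_le_mul_of_nonneg_right hweight (sq_nonneg x)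

lemma tendsto_expectileLoss_cocompact (hα : α ∈ Ioo 0 1) :
    Tendsto (expectileLoss α) (cocompact ℝ) atTop :=
  tendsto_atTop_mono min_mul_sq_le_expectileLoss <|
    (((tendsto_pow_atTop two_ne_zero).comp tendsto_norm_cocompact_atTop).const_mul_atTop
      (lt_min hα.1 (sub_pos.2 hα.2))).congr fun x => by simp

end ExpectileLoss

theorem expectile_loss_strictConvex_unique_min
    {Ω : Type*} [MeasurableSpace Ω] (μ : Measure Ω) [IsProbabilityMeasure μ]
    (X : Ω → ℝ) (hX : Integrable X μ) (hX2 : Integrable (fun ω => X ω ^ 2) μ)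
    (α : ℝ) (hα : α ∈ Set.Ioo (0 : ℝ) 1) :
    StrictConvexOn ℝ Set.univ
        (fun m : ℝ => ∫ ω, |α - (if X ω - m < 0 then 1 else 0)| * (X ω - m) ^ 2 ∂μ) ∧
      ∃! m : ℝ, ∀ m' : ℝ,
        (∫ ω, |α - (if X ω - m < 0 then 1 else 0)| * (X ω - m) ^ 2 ∂μ) ≤
          ∫ ω, |α - (if X ω - m' < 0 then 1 else 0)| * (X ω - m') ^ 2 ∂μ := by
  have hloss := strictConvexOn_expectileLoss hα
  have hXsq : MemLp X 2 μ := (memLp_two_iff_integrable_sq hX.1).2 hX2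
  have hint (m : ℝ) : Integrable (fun ω => expectileLoss α (X ω - m)) μ :=
    integrable_comp_sub_of_abs_le_sq hloss.convexOn.continuous
      (abs_expectileLoss_le (Ioo_subset_Icc_self hα)) hXsq m
  have hconv : StrictConvexOn ℝ univ fun m => ∫ ω, expectileLoss α (X ω - m) ∂μ :=
    strictConvexOn_integral (fun ω => hloss.comp_const_sub (X ω)) fun m _ => hint m
  exact ⟨hconv, hconv.existsUnique_forall_le <| tendsto_integral_comp_sub_cocompact
    hloss.convexOn (tendsto_expectileLoss_cocompact hα) hX hint⟩
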